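/- Let A and B be 3×3 real positive-definite symmetric matrices such that B = R A Rᵀ for some 3×3 real orthogonal matrix R. Then there exist Q ∈ SO(3) and vectors a, n ∈ ℝ³ with Q B − A = a ⊗ n if and only if there exists a unit vector ê ∈ ℝ³ with B = (−I + 2 ê⊗ê) A (−I + 2 ê⊗ê). -/

import Mathlib

/-!
If `Q B - A = a ⊗ n` with `Q` a rotation, then `B² = (QB)ᵀ(QB) = A² + m ⊗ n + n ⊗ m` with
`m = A a + |a|²/2 n`. As `B² = R A² Rᵀ`, the symmetric matrix `T = A²` and this rank-two
perturbation have equal trace, trace of the square and determinant. These force `m ⊥ n`,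
`2 m·Tn + |m|²|n|² = 0`, and, read in the frame `(m, n, m × n)`, that `T m` or `T n` lies in the
plane of `m` and `n`; this is exactly what makes the perturbation the conjugate `P T P` by the
half-turn `P` about `m` (or `n`). Uniqueness of positive square roots then gives `B = P A P`.

Conversely, if `B = P A P` then `F = A (1 + e ⊗ n)`, for a suitable `n ⊥ e`, satisfies
`FᵀF = B²` and `det F = det B`, so `Q = F B⁻¹` is a rotation with `Q B - A = A e ⊗ n`.
-/

open Matrix

/-- The 180° rotation matrix `-I + 2 ê⊗ê` for a unit vector `ê`. -/
noncomputable def reflMat (e : Fin 3 → ℝ) : Matrix (Fin 3) (Fin 3) ℝ :=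
  -1 + (2 : ℝ) • Matrix.vecMulVec e e

/-- Membership in SO(3): orthogonal with determinant 1. -/
def SO3 (R : Matrix (Fin 3) (Fin 3) ℝ) : Prop := R * Rᵀ = 1 ∧ R.det = 1

lemma conj_mul_conj_of_mul_eq_one {M : Type*} [Monoid M] {R S : M} (h : S * R = 1) (X Y : M) :
    R * X * S * (R * Y * S) = R * (X * Y) * S := by
  simp only [mul_assoc]
  rw [← mul_assoc S, h, one_mul]

namespace Matrix

variable {ι : Type*} [Fintype ι]

lemma det_one_add_vecMulVec [DecidableEq ι] {R : Type*} [CommRing R] (u v : ι → R) :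
    (1 + vecMulVec u v).det = 1 + v ⬝ᵥ u := by
  rw [vecMulVec_eq Unit, det_one_add_replicateCol_mul_replicateRow]

lemma det_mul_mul_transpose [DecidableEq ι] {R : Type*} [CommRing R] (G M : Matrix ι ι R) :
    (G * M * Gᵀ).det = G.det ^ 2 * M.det := by
  rw [det_mul, det_mul, det_transpose]
  ring

lemma IsSymm.vecMul_eq_mulVec {R : Type*} [CommSemiring R] {S : Matrix ι ι R} (hS : S.IsSymm)
    (v : ι → R) : v ᵥ* S = S *ᵥ v := by
  rw [← mulVec_transpose, hS.eq]

lemma IsSymm.dotProduct_mulVec_comm {R : Type*} [CommSemiring R] {S : Matrix ι ι R}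
    (hS : S.IsSymm) (v w : ι → R) : v ⬝ᵥ S *ᵥ w = w ⬝ᵥ S *ᵥ v := by
  rw [dotProduct_mulVec, hS.vecMul_eq_mulVec, dotProduct_comm]

lemma trace_add_vecMulVec_add_vecMulVec {R : Type*} [CommRing R] (T : Matrix ι ι R)
    (m n : ι → R) : trace (T + vecMulVec m n + vecMulVec n m) = trace T + 2 * (m ⬝ᵥ n) := by
  rw [trace_add, trace_add, trace_vecMulVec, trace_vecMulVec, dotProduct_comm n m]
  ring

lemma trace_mul_self_add_vecMulVec_add_vecMulVec {R : Type*} [CommRing R] {T : Matrix ι ι R}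
    (hT : T.IsSymm) (m n : ι → R) :
    trace ((T + vecMulVec m n + vecMulVec n m) * (T + vecMulVec m n + vecMulVec n m)) =
      trace (T * T) + 4 * (m ⬝ᵥ T *ᵥ n) + 2 * (m ⬝ᵥ n) ^ 2 + 2 * ((m ⬝ᵥ m) * (n ⬝ᵥ n)) := by
  simp only [add_mul, mul_add, mul_vecMulVec, vecMulVec_mul, hT.vecMul_eq_mulVec, trace_add,
    trace_vecMulVec, vecMulVec_mulVec, op_smul_eq_smul, smul_dotProduct, smul_eq_mul]
  rw [dotProduct_comm (T *ᵥ m) n, dotProduct_comm (T *ᵥ n) m, hT.dotProduct_mulVec_comm n m,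
    dotProduct_comm n m]
  ring

lemma mul_self_eq_of_mul_sub_eq_vecMulVec [DecidableEq ι] {Q A B : Matrix ι ι ℝ} {a n : ι → ℝ}
    (hQ : Qᵀ * Q = 1) (hA : A.IsSymm) (hB : B.IsSymm) (h : Q * B - A = vecMulVec a n) :
    B * B = A * A + vecMulVec (A *ᵥ a + ((a ⬝ᵥ a) / 2) • n) n
      + vecMulVec n (A *ᵥ a + ((a ⬝ᵥ a) / 2) • n) := by
  have hQB : Q * B = A + vecMulVec a n := by rw [← h, add_sub_cancel]
  calc B * B = (Q * B)ᵀ * (Q * B) := by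
        rw [transpose_mul, hB.eq, Matrix.mul_assoc, ← Matrix.mul_assoc Qᵀ, hQ, Matrix.one_mul]
    _ = _ := by
        rw [hQB, transpose_add, hA.eq, transpose_vecMulVec]
        simp only [add_mul, mul_add, mul_vecMulVec, vecMulVec_mul, vecMulVec_mulVec,
          op_smul_eq_smul, hA.vecMul_eq_mulVec, add_vecMulVec, vecMulVec_add, smul_vecMulVec,
          vecMulVec_smul]
        module

open scoped MatrixOrder in
lemma PosSemidef.eq_of_mul_self_eq [DecidableEq ι] {A B : Matrix ι ι ℝ}
    (hA : A.PosSemidef) (hB : B.PosSemidef) (h : A * A = B * B) : A = B :=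
  (CFC.mul_self_eq_mul_self_iff A B hA.nonneg hB.nonneg).1 h

end Matrix

section reflMat

variable {e : Fin 3 → ℝ}

lemma reflMat_transpose (e : Fin 3 → ℝ) : (reflMat e)ᵀ = reflMat e := by
  simp [reflMat, transpose_vecMulVec]

lemma reflMat_mul_self (he : e ⬝ᵥ e = 1) : reflMat e * reflMat e = 1 := by
  simp only [reflMat, add_mul, mul_add, neg_mul, mul_neg, one_mul, mul_one, smul_mul_smul_comm,
    vecMulVec_mul_vecMulVec, he, one_smul]
  module

lemma reflMat_mul_mul_reflMat (S : Matrix (Fin 3) (Fin 3) ℝ) :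
    reflMat e * S * reflMat e = S - (2 : ℝ) • (vecMulVec (S *ᵥ e) e + vecMulVec e (e ᵥ* S))
      + (4 * (e ⬝ᵥ S *ᵥ e)) • vecMulVec e e := by
  simp only [reflMat, add_mul, mul_add, neg_mul, mul_neg, one_mul, mul_one, smul_mul_assoc,
    mul_smul_comm, mul_vecMulVec, vecMulVec_mul, vecMulVec_mulVec, op_smul_eq_smul,
    smul_vecMulVec, dotProduct_mulVec]
  module

lemma reflMat_mul_mul_reflMat_of_mulVec_eq {S : Matrix (Fin 3) (Fin 3) ℝ} (hS : S.IsSymm)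
    (he : e ⬝ᵥ e = 1) {c : ℝ} {d : Fin 3 → ℝ} (hd : e ⬝ᵥ d = 0) (hSe : S *ᵥ e = c • e + d) :
    reflMat e * S * reflMat e = S - (2 : ℝ) • (vecMulVec d e + vecMulVec e d) := by
  rw [reflMat_mul_mul_reflMat, hS.vecMul_eq_mulVec, hSe, dotProduct_add, dotProduct_smul, he, hd,
    add_vecMulVec, vecMulVec_add, smul_vecMulVec, vecMulVec_smul]
  simp only [smul_eq_mul]
  module

lemma exists_reflMat_conj_eq_self {T : Matrix (Fin 3) (Fin 3) ℝ} (hT : T.IsSymm) :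
    ∃ e : Fin 3 → ℝ, e ⬝ᵥ e = 1 ∧ reflMat e * T * reflMat e = T := by
  have hH : T.IsHermitian := isHermitian_iff_isSymm.2 hT
  let v := hH.eigenvectorBasis 0
  have hv : (v : Fin 3 → ℝ) ⬝ᵥ v = 1 := by
    have h := orthonormal_iff_ite.1 hH.eigenvectorBasis.orthonormal 0 0
    rwa [if_pos rfl, EuclideanSpace.inner_eq_star_dotProduct, star_trivial] at h
  refine ⟨v, hv, ?_⟩
  simpa using reflMat_mul_mul_reflMat_of_mulVec_eq hT hv (dotProduct_zero _)
    (by rw [add_zero]; exact hH.mulVec_eigenvectorBasis 0)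

end reflMat

section perturbation

variable {T : Matrix (Fin 3) (Fin 3) ℝ} {m n : Fin 3 → ℝ}

lemma eq_zero_of_dotProduct_eq_zero_of_cross_ne_zero {x : Fin 3 → ℝ} (hm : x ⬝ᵥ m = 0)
    (hn : x ⬝ᵥ n = 0) (hz : x ⬝ᵥ m ⨯₃ n = 0) (hmn : m ⨯₃ n ≠ 0) : x = 0 := by
  have hzx : m ⨯₃ n ⨯₃ x = 0 := by
    rw [cross_cross_eq_smul_sub_smul, dotProduct_comm m, dotProduct_comm n, hm, hn]
    simp
  have h := cross_cross_eq_smul_sub_smul' (m ⨯₃ n) (m ⨯₃ n) x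
  rw [hzx, map_zero, dotProduct_comm, hz, zero_smul, zero_sub, eq_comm, neg_eq_zero] at h
  exact (smul_eq_zero.1 h).resolve_left (mt dotProduct_self_eq_zero.1 hmn)

lemma cross_ne_zero_of_dotProduct_eq_zero (hmn : m ⬝ᵥ n = 0) (hm : m ≠ 0) (hn : n ≠ 0) :
    m ⨯₃ n ≠ 0 := by
  intro h
  have := cross_dot_cross m n m n
  rw [h, zero_dotProduct, hmn, dotProduct_comm n m, hmn, mul_zero, sub_zero, eq_comm] at this
  exact mul_ne_zero (mt dotProduct_self_eq_zero.1 hm) (mt dotProduct_self_eq_zero.1 hn) this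

/-- In the frame `(m, n, m ⨯₃ n)` the perturbation only adds `(m ⬝ᵥ m) * (n ⬝ᵥ n)` to the
`(0, 1)` and `(1, 0)` entries of `T`, so the two determinants differ by an explicit quadratic. -/
lemma mul_dotProduct_mulVec_cross_eq_zero (hT : T.IsSymm) (hmn : m ⬝ᵥ n = 0) (hm : m ≠ 0)
    (hn : n ≠ 0) (h2 : 2 * (m ⬝ᵥ T *ᵥ n) + (m ⬝ᵥ m) * (n ⬝ᵥ n) = 0)
    (hdet : (T + vecMulVec m n + vecMulVec n m).det = T.det) :
    (m ⬝ᵥ T *ᵥ (m ⨯₃ n)) * (n ⬝ᵥ T *ᵥ (m ⨯₃ n)) = 0 := by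
  let G : Matrix (Fin 3) (Fin 3) ℝ := ![m, n, m ⨯₃ n]
  have h : (G * (T + vecMulVec m n + vecMulVec n m) * Gᵀ).det = (G * T * Gᵀ).det := by
    rw [det_mul_mul_transpose, det_mul_mul_transpose, hdet]
  simp only [det_fin_three, mul_mul_apply, transpose_transpose] at h
  simp only [G, cons_val_zero, cons_val_one, cons_val_two, head_cons, tail_cons, add_mulVec,
    vecMulVec_mulVec, op_smul_eq_smul, dotProduct_add, dotProduct_smul, dot_self_cross,
    dot_cross_self, dotProduct_comm n m, dotProduct_comm (m ⨯₃ n) m, dotProduct_comm (m ⨯₃ n) n,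
    hmn, smul_eq_mul] at h
  rw [hT.dotProduct_mulVec_comm n m, hT.dotProduct_mulVec_comm (m ⨯₃ n) m,
    hT.dotProduct_mulVec_comm (m ⨯₃ n) n] at h
  have hpq : (m ⬝ᵥ m) * (n ⬝ᵥ n) * 2 ≠ 0 :=
    mul_ne_zero (mul_ne_zero (mt dotProduct_self_eq_zero.1 hm) (mt dotProduct_self_eq_zero.1 hn))
      two_ne_zero
  refine (mul_eq_zero.1 ?_).resolve_left hpq
  linear_combination h + (m ⬝ᵥ m) * (n ⬝ᵥ n) * ((m ⨯₃ n) ⬝ᵥ T *ᵥ (m ⨯₃ n)) * h2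

lemma exists_reflMat_conj_of_dotProduct_mulVec_cross_eq_zero (hT : T.IsSymm)
    (hmn : m ⬝ᵥ n = 0) (hm : m ≠ 0) (hn : n ≠ 0)
    (h2 : 2 * (m ⬝ᵥ T *ᵥ n) + (m ⬝ᵥ m) * (n ⬝ᵥ n) = 0) (hmz : m ⬝ᵥ T *ᵥ (m ⨯₃ n) = 0) :
    ∃ e : Fin 3 → ℝ, e ⬝ᵥ e = 1 ∧
      T + vecMulVec m n + vecMulVec n m = reflMat e * T * reflMat e := by
  have hp : 0 < m ⬝ᵥ m := (dotProduct_self_star_pos_iff (v := m)).2 hm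
  have hTm : (m ⬝ᵥ m) • T *ᵥ m = (m ⬝ᵥ T *ᵥ m) • m - ((m ⬝ᵥ m) ^ 2 / 2) • n := by
    rw [← sub_eq_zero]
    refine eq_zero_of_dotProduct_eq_zero_of_cross_ne_zero (m := m) (n := n) ?_ ?_ ?_
      (cross_ne_zero_of_dotProduct_eq_zero hmn hm hn)
    all_goals
      simp only [sub_dotProduct, smul_dotProduct, smul_eq_mul, dot_self_cross, dot_cross_self]
    · rw [dotProduct_comm (T *ᵥ m) m, dotProduct_comm n m, hmn]
      ring
    · rw [dotProduct_comm (T *ᵥ m) n, hT.dotProduct_mulVec_comm n m, hmn]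
      linear_combination (m ⬝ᵥ m) / 2 * h2
    · rw [dotProduct_comm (T *ᵥ m), hT.dotProduct_mulVec_comm, hmz]
      ring
  obtain ⟨s, hs⟩ : ∃ s : ℝ, s ^ 2 * (m ⬝ᵥ m) = 1 :=
    ⟨(√(m ⬝ᵥ m))⁻¹, by rw [inv_pow, Real.sq_sqrt hp.le, inv_mul_cancel₀ hp.ne']⟩
  have he : (s • m) ⬝ᵥ (s • m) = 1 := by
    rw [dotProduct_smul, smul_dotProduct, smul_eq_mul, smul_eq_mul, ← mul_assoc, ← sq, hs]
  have hd : (s • m) ⬝ᵥ (-(s * (m ⬝ᵥ m)) / 2) • n = 0 := by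
    rw [dotProduct_smul, smul_dotProduct, hmn, smul_zero, smul_zero]
  have hTe : T *ᵥ (s • m) =
      ((m ⬝ᵥ T *ᵥ m) / (m ⬝ᵥ m)) • (s • m) + (-(s * (m ⬝ᵥ m)) / 2) • n := by
    rw [mulVec_smul]
    apply smul_right_injective _ hp.ne'
    simp only [smul_add, smul_smul]
    rw [mul_comm (m ⬝ᵥ m) s, ← smul_smul, hTm]
    match_scalars <;> field_simp
  refine ⟨s • m, he, ?_⟩
  rw [reflMat_mul_mul_reflMat_of_mulVec_eq hT he hd hTe, vecMulVec_smul, smul_vecMulVec,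
    vecMulVec_smul, smul_vecMulVec, smul_smul, smul_smul]
  match_scalars <;> linarith

lemma exists_reflMat_conj_of_eq_orthogonal_conj (hT : T.IsSymm) {R : Matrix (Fin 3) (Fin 3) ℝ}
    (hR : Rᵀ * R = 1) (h : T + vecMulVec m n + vecMulVec n m = R * T * Rᵀ) :
    ∃ e : Fin 3 → ℝ, e ⬝ᵥ e = 1 ∧
      T + vecMulVec m n + vecMulVec n m = reflMat e * T * reflMat e := by
  have hmn : m ⬝ᵥ n = 0 := by
    have := trace_add_vecMulVec_add_vecMulVec T m n
    rw [h, trace_mul_cycle, hR, Matrix.one_mul] at this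
    linarith
  have h2 : 2 * (m ⬝ᵥ T *ᵥ n) + (m ⬝ᵥ m) * (n ⬝ᵥ n) = 0 := by
    have := trace_mul_self_add_vecMulVec_add_vecMulVec hT m n
    rw [h, conj_mul_conj_of_mul_eq_one hR, trace_mul_cycle, hR, Matrix.one_mul, hmn] at this
    linarith
  have hdet : (T + vecMulVec m n + vecMulVec n m).det = T.det := by
    have hR2 : R.det ^ 2 = 1 := by simpa [sq] using congrArg det hR
    rw [h, det_mul_mul_transpose, hR2, one_mul]
  obtain rfl | hm := eq_or_ne m 0
  · simpa using (exists_reflMat_conj_eq_self hT).imp fun _ ⟨he, h⟩ ↦ ⟨he, h.symm⟩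
  obtain rfl | hn := eq_or_ne n 0
  · simpa using (exists_reflMat_conj_eq_self hT).imp fun _ ⟨he, h⟩ ↦ ⟨he, h.symm⟩
  rcases mul_eq_zero.1 (mul_dotProduct_mulVec_cross_eq_zero hT hmn hm hn h2 hdet) with hmz | hnz
  · exact exists_reflMat_conj_of_dotProduct_mulVec_cross_eq_zero hT hmn hm hn h2 hmz
  · rw [add_right_comm]
    refine exists_reflMat_conj_of_dotProduct_mulVec_cross_eq_zero hT (by rwa [dotProduct_comm])
      hn hm (by rw [hT.dotProduct_mulVec_comm]; linarith) ?_
    rw [← cross_anticomm, mulVec_neg, dotProduct_neg, hnz, neg_zero]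

end perturbation

/-- The second twin solution of Ball and James: `n` is chosen so that `(1 + e ⊗ n) * reflMat e`
is minus the reflection in `e` that is orthogonal for the form `⟨x, S y⟩`, hence preserves `S`. -/
noncomputable def twinNormal (S : Matrix (Fin 3) (Fin 3) ℝ) (e : Fin 3 → ℝ) : Fin 3 → ℝ :=
  (2 : ℝ) • (e - (e ⬝ᵥ S *ᵥ e)⁻¹ • S *ᵥ e)

section twin

variable {S : Matrix (Fin 3) (Fin 3) ℝ} {e : Fin 3 → ℝ}

lemma twinNormal_dotProduct (he : e ⬝ᵥ e = 1) (hSe : e ⬝ᵥ S *ᵥ e ≠ 0) :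
    twinNormal S e ⬝ᵥ e = 0 := by
  rw [twinNormal, smul_dotProduct, sub_dotProduct, smul_dotProduct, he, dotProduct_comm (S *ᵥ e),
    smul_eq_mul (a := _⁻¹), inv_mul_cancel₀ hSe, sub_self, smul_zero]

lemma one_add_vecMulVec_twinNormal_conj (hS : S.IsSymm) (hSe : e ⬝ᵥ S *ᵥ e ≠ 0) :
    (1 + vecMulVec (twinNormal S e) e) * S * (1 + vecMulVec e (twinNormal S e)) =
      reflMat e * S * reflMat e := by
  rw [reflMat_mul_mul_reflMat, hS.vecMul_eq_mulVec, twinNormal]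
  simp only [add_mul, mul_add, one_mul, mul_one, smul_mul_assoc, mul_smul_comm, sub_mul, mul_sub,
    mul_vecMulVec, vecMulVec_mul, vecMulVec_mulVec, op_smul_eq_smul, hS.vecMul_eq_mulVec,
    vecMulVec_smul, smul_vecMulVec, sub_vecMulVec, vecMulVec_sub, smul_sub, smul_smul,
    dotProduct_comm (S *ᵥ e) e]
  match_scalars <;> field_simp <;> ring

end twin

lemma SO3_mul_inv_of_transpose_mul_self_eq {F B : Matrix (Fin 3) (Fin 3) ℝ} (hB : B.IsSymm)
    (hBdet : IsUnit B.det) (hF : Fᵀ * F = B * B) (hdet : F.det = B.det) : SO3 (F * B⁻¹) := by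
  refine ⟨mul_eq_one_comm.1 ?_, ?_⟩
  · rw [transpose_mul, transpose_nonsing_inv, hB.eq, Matrix.mul_assoc, ← Matrix.mul_assoc Fᵀ, hF,
      ← Matrix.mul_assoc, ← Matrix.mul_assoc, nonsing_inv_mul _ hBdet, Matrix.one_mul,
      mul_nonsing_inv _ hBdet]
  · rw [det_mul, det_nonsing_inv, hdet, Ring.inverse_eq_inv', mul_inv_cancel₀ hBdet.ne_zero]

lemma exists_SO3_mul_reflMat_conj_sub_eq_vecMulVec {A : Matrix (Fin 3) (Fin 3) ℝ}
    (hA : A.PosDef) {e : Fin 3 → ℝ} (he : e ⬝ᵥ e = 1) :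
    ∃ (Q : Matrix (Fin 3) (Fin 3) ℝ) (a n : Fin 3 → ℝ),
      SO3 Q ∧ Q * (reflMat e * A * reflMat e) - A = vecMulVec a n := by
  have hAs : A.IsSymm := isHermitian_iff_isSymm.1 hA.isHermitian
  have hAA : (A * A).IsSymm := by rw [IsSymm, transpose_mul, hAs.eq]
  have hAe : A *ᵥ e ≠ 0 := by
    intro h
    have := hA.dotProduct_mulVec_pos (x := e) (by rintro rfl; simp at he)
    simp [h] at this
  have hβ : e ⬝ᵥ (A * A) *ᵥ e ≠ 0 := by
    rw [← mulVec_mulVec, dotProduct_mulVec, hAs.vecMul_eq_mulVec]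
    exact mt dotProduct_self_eq_zero.1 hAe
  have hP := reflMat_mul_self he
  have hdetB : (reflMat e * A * reflMat e).det = A.det := by
    rw [det_mul, det_mul, mul_right_comm, ← det_mul, hP, det_one, one_mul]
  have hB : IsUnit (reflMat e * A * reflMat e).det :=
    hdetB ▸ (isUnit_iff_isUnit_det A).1 hA.isUnit
  let n := twinNormal (A * A) e
  let F := A * (1 + vecMulVec e n)
  have hF : Fᵀ * F = (reflMat e * A * reflMat e) * (reflMat e * A * reflMat e) := by
    rw [conj_mul_conj_of_mul_eq_one hP, ← one_add_vecMulVec_twinNormal_conj hAA hβ]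
    simp only [F, n, transpose_mul, transpose_add, transpose_one, transpose_vecMulVec, hAs.eq,
      Matrix.mul_assoc]
  have hdetF : F.det = A.det := by
    rw [det_mul, det_one_add_vecMulVec, twinNormal_dotProduct he hβ, add_zero, mul_one]
  refine ⟨F * (reflMat e * A * reflMat e)⁻¹, A *ᵥ e, n,
    SO3_mul_inv_of_transpose_mul_self_eq ?_ hB hF (hdetF.trans hdetB.symm), ?_⟩
  · rw [IsSymm, transpose_mul, transpose_mul, reflMat_transpose, hAs.eq, Matrix.mul_assoc]
  · rw [Matrix.mul_assoc, nonsing_inv_mul _ hB, Matrix.mul_one]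
    simp only [F, mul_add, Matrix.mul_one, mul_vecMulVec, add_sub_cancel_left]

theorem stmt_14 (A B : Matrix (Fin 3) (Fin 3) ℝ) (hA : A.PosDef) (hB : B.PosDef)
    (R : Matrix (Fin 3) (Fin 3) ℝ) (hR : R * Rᵀ = 1) (hBA : B = R * A * Rᵀ) :
    (∃ (Q : Matrix (Fin 3) (Fin 3) ℝ) (a n : Fin 3 → ℝ),
        SO3 Q ∧ Q * B - A = Matrix.vecMulVec a n)
    ↔ (∃ e : Fin 3 → ℝ, e ⬝ᵥ e = 1 ∧ B = reflMat e * A * reflMat e) := by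
  have hAs : A.IsSymm := isHermitian_iff_isSymm.1 hA.isHermitian
  constructor
  · rintro ⟨Q, a, n, ⟨hQ, -⟩, h⟩
    have hBB := mul_self_eq_of_mul_sub_eq_vecMulVec (mul_eq_one_comm.1 hQ) hAs
      (isHermitian_iff_isSymm.1 hB.isHermitian) h
    have hRR : Rᵀ * R = 1 := mul_eq_one_comm.1 hR
    obtain ⟨e, he, hAe⟩ := exists_reflMat_conj_of_eq_orthogonal_conj
      (by rw [IsSymm, transpose_mul, hAs.eq] : (A * A).IsSymm) hRR
      (by rw [← hBB, hBA, conj_mul_conj_of_mul_eq_one hRR])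
    refine ⟨e, he, hB.posSemidef.eq_of_mul_self_eq ?_ ?_⟩
    · simpa [reflMat_transpose] using hA.posSemidef.mul_mul_conjTranspose_same (reflMat e)
    · rw [hBB, hAe, conj_mul_conj_of_mul_eq_one (reflMat_mul_self he)]
  · rintro ⟨e, he, rfl⟩
    exact exists_SO3_mul_reflMat_conj_sub_eq_vecMulVec hA he
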